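/- In a labelled open graph with gflow, no two distinct internal vertices measured in the XY plane have the same neighbourhood: if u,v ∈ V∖O are distinct with λ(u)=λ(v)=XY, then N_G(u) ≠ N_G(v). -/

import Mathlib

open Set

/-- The three measurement planes. -/
inductive MPlane | XY | XZ | YZ
deriving DecidableEq

/-- The odd neighbourhood of a set `K`: vertices with an odd number of neighbours in `K`. -/
def oddNbhd {V : Type*} (G : SimpleGraph V) (K : Set V) : Set V :=
  {u | Odd (K ∩ G.neighborSet u).ncard}

/-- `(g, prec)` is a gflow for the labelled open graph `(G, I, O, lam)`. -/
structure GFlow {V : Type*} (G : SimpleGraph V) (I O : Set V) (lam : V → MPlane)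
    (g : V → Set V) (prec : V → V → Prop) : Prop where
  irrefl : ∀ v, ¬ prec v v
  trans : ∀ u v w, prec u v → prec v w → prec u w
  noInput : ∀ v, v ∉ O → g v ∩ I = ∅
  g1 : ∀ v, v ∉ O → ∀ w ∈ g v, w ≠ v → prec v w
  g2 : ∀ v, v ∉ O → ∀ w ∈ oddNbhd G (g v), w ≠ v → prec v w
  gXY : ∀ v, v ∉ O → lam v = MPlane.XY → v ∉ g v ∧ v ∈ oddNbhd G (g v)
  gXZ : ∀ v, v ∉ O → lam v = MPlane.XZ → v ∈ g v ∧ v ∈ oddNbhd G (g v)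
  gYZ : ∀ v, v ∉ O → lam v = MPlane.YZ → v ∈ g v ∧ v ∉ oddNbhd G (g v)

theorem mem_oddNbhd_iff_of_neighborSet_eq {V : Type*} {G : SimpleGraph V} {u v : V}
    (hN : G.neighborSet u = G.neighborSet v) (K : Set V) :
    u ∈ oddNbhd G K ↔ v ∈ oddNbhd G K := by
  simp only [oddNbhd, mem_ofPred_eq, hN]

namespace GFlow

variable {V : Type*} {G : SimpleGraph V} {I O : Set V} {lam : V → MPlane}
  {g : V → Set V} {prec : V → V → Prop}

theorem asymm (h : GFlow G I O lam g prec) {u v : V} (huv : prec u v) : ¬ prec v u :=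
  fun hvu => h.irrefl u (h.trans u v u huv hvu)

theorem neighborSet_ne_of_mem_oddNbhd_self (h : GFlow G I O lam g prec) {u v : V}
    (hu : u ∉ O) (hv : v ∉ O) (hne : u ≠ v)
    (hu_odd : u ∈ oddNbhd G (g u)) (hv_odd : v ∈ oddNbhd G (g v)) :
    G.neighborSet u ≠ G.neighborSet v := by
  intro hN
  have huv : prec u v :=
    h.g2 u hu v ((mem_oddNbhd_iff_of_neighborSet_eq hN _).1 hu_odd) hne.symm
  have hvu : prec v u :=
    h.g2 v hv u ((mem_oddNbhd_iff_of_neighborSet_eq hN _).2 hv_odd) hne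
  exact h.asymm huv hvu

end GFlow

theorem gflow_XY_distinct_neighbourhoods_general {V : Type*}
    (G : SimpleGraph V) (I O : Set V) (lam : V → MPlane)
    (g : V → Set V) (prec : V → V → Prop)
    (h : GFlow G I O lam g prec) (u v : V) (hu : u ∉ O) (hv : v ∉ O)
    (hne : u ≠ v) (hlu : lam u = MPlane.XY) (hlv : lam v = MPlane.XY) :
    G.neighborSet u ≠ G.neighborSet v :=
  h.neighborSet_ne_of_mem_oddNbhd_self hu hv hne (h.gXY u hu hlu).2 (h.gXY v hv hlv).2

/-- In a labelled open graph with gflow, two distinct non-output vertices both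
measured in the XY plane have distinct neighbourhoods. -/
theorem gflow_XY_distinct_neighbourhoods {V : Type*} [Fintype V]
    (G : SimpleGraph V) (I O : Set V) (lam : V → MPlane)
    (g : V → Set V) (prec : V → V → Prop)
    (h : GFlow G I O lam g prec) (u v : V) (hu : u ∉ O) (hv : v ∉ O)
    (hne : u ≠ v) (hlu : lam u = MPlane.XY) (hlv : lam v = MPlane.XY) :
    G.neighborSet u ≠ G.neighborSet v :=
  gflow_XY_distinct_neighbourhoods_general G I O lam g prec h u v hu hv hne hlu hlv
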